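/- Let H be a complex Hilbert space, M ∈ B(H), β ≥ 0, and let r ≥ 1 be a real number. Then ω(M)^{4r} ≤ (1/16)·((2β+1)/(β+1))·‖ |M|^{2r} + |M*|^{2r} ‖² + (1/8)·((2β+3)/(β+1))·‖ |M|^{2r} + |M*|^{2r} ‖·ω(M²)^{r}, where |M|^{2r} and |M*|^{2r} denote real powers of the positive operators |M| and |M*| defined via the continuous functional calculus. -/

import Mathlib

open ContinuousLinearMap in
/-- The numerical radius `ω(A) = sup { |⟨A x, x⟩| : ‖x‖ = 1 }` of a bounded operator. -/
noncomputable def numRad {H : Type*} [NormedAddCommGroup H] [InnerProductSpace ℂ H]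
    (A : H →L[ℂ] H) : ℝ :=
  sSup {t : ℝ | ∃ x : H, ‖x‖ = 1 ∧ t = ‖(inner ℂ (A x) x : ℂ)‖}

/-- The absolute value `|A| = (A*A)^{1/2}` of a bounded operator, via the continuous
functional calculus. -/
noncomputable def absOp {E F : Type*} [NormedAddCommGroup E] [InnerProductSpace ℂ E]
    [CompleteSpace E] [NormedAddCommGroup F] [InnerProductSpace ℂ F] [CompleteSpace F]
    (A : E →L[ℂ] F) : E →L[ℂ] E :=
  cfc Real.sqrt ((ContinuousLinearMap.adjoint A).comp A)

open ContinuousLinearMap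

/-!
For a unit vector `x` put `s = |⟨Mx, x⟩|`, `u = ‖Mx‖ ‖M*x‖` and `v = |⟨M²x, x⟩| = |⟨Mx, M*x⟩|`.
Buzano's inequality gives `s² ≤ (u + v) / 2`, hence `s^{2r} ≤ (u^r + v^r) / 2` by convexity.
McCarthy's inequality `⟨Tx, x⟩^r ≤ ⟨T^r x, x⟩` bounds `‖Mx‖^{2r}` and `‖M*x‖^{2r}` by the
quadratic forms of `|M|^{2r}` and `|M*|^{2r}`, so AM-GM gives `u^r ≤ n / 2` with
`n = ‖|M|^{2r} + |M*|^{2r}‖`; also `v^r ≤ w := ω(M²)^r ≤ n / 2`. Squaring `(u^r + v^r) / 2`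
and bounding the cross terms in two ways gives `s^{4r} ≤ n²/16 + 3nw/8` and
`s^{4r} ≤ n²/8 + nw/4`; the claimed bound is their convex combination with weights
`1 / (β + 1)` and `β / (β + 1)`.
-/

open scoped InnerProductSpace
open RCLike

theorem Real.tangent_le_rpow {r : ℝ} (hr : 1 ≤ r) {s t : ℝ} (hs : 0 ≤ s) (ht : 0 ≤ t) :
    s ^ r + r * s ^ (r - 1) * (t - s) ≤ t ^ r := by
  rcases hs.eq_or_lt with rfl | hs
  · rcases hr.eq_or_lt with rfl | hr
    · simp
    · simpa [Real.zero_rpow (by linarith : r ≠ 0), Real.zero_rpow (by linarith : r - 1 ≠ 0)]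
        using Real.rpow_nonneg ht r
  · have bernoulli := one_add_mul_self_le_rpow_one_add
      (by rw [le_div_iff₀ hs]; linarith : -1 ≤ (t - s) / s) hr
    rw [show 1 + (t - s) / s = t / s by field_simp; ring, Real.div_rpow ht hs.le,
      le_div_iff₀ (Real.rpow_pos_of_pos hs r)] at bernoulli
    rw [Real.rpow_sub_one hs.ne']
    exact le_of_eq_of_le (by ring) bernoulli

theorem Real.rpow_two_mul_le_of_sq_le {r s u v : ℝ} (hr : 1 ≤ r) (hs : 0 ≤ s) (hu : 0 ≤ u)
    (hv : 0 ≤ v) (h : s ^ 2 ≤ (u + v) / 2) : s ^ (2 * r) ≤ (u ^ r + v ^ r) / 2 := by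
  have jensen := (convexOn_rpow hr).2 (Set.mem_Ici.mpr hu) (Set.mem_Ici.mpr hv)
    (by norm_num : (0 : ℝ) ≤ 1 / 2) (by norm_num : (0 : ℝ) ≤ 1 / 2) (by norm_num)
  simp only [smul_eq_mul] at jensen
  calc s ^ (2 * r) = (s ^ 2) ^ r := by rw [Real.rpow_mul hs, Real.rpow_two]
    _ ≤ ((u + v) / 2) ^ r := by gcongr
    _ = (1 / 2 * u + 1 / 2 * v) ^ r := by ring_nf
    _ ≤ (u ^ r + v ^ r) / 2 := by linarith

theorem add_div_two_sq_le {β n p q w : ℝ} (hβ : 0 ≤ β) (hp : 0 ≤ p) (hq : 0 ≤ q)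
    (hpn : p ≤ n / 2) (hqw : q ≤ w) (hwn : w ≤ n / 2) :
    ((p + q) / 2) ^ 2 ≤
      1 / 16 * ((2 * β + 1) / (β + 1)) * n ^ 2 + 1 / 8 * ((2 * β + 3) / (β + 1)) * n * w := by
  have hpw : p * q ≤ n / 2 * w := mul_le_mul hpn hqw hq (by linarith)
  have hqq : q * q ≤ n / 2 * w := mul_le_mul (hqw.trans hwn) hqw hq (by linarith)
  have hpp : p * p ≤ n / 2 * (n / 2) := mul_le_mul hpn hpn hp (by linarith)
  have bound₀ : ((p + q) / 2) ^ 2 ≤ n ^ 2 / 16 + 3 / 8 * n * w := by nlinarith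
  have bound₁ : ((p + q) / 2) ^ 2 ≤ n ^ 2 / 8 + n * w / 4 := by nlinarith [sq_nonneg (p - q)]
  rw [show 1 / 16 * ((2 * β + 1) / (β + 1)) * n ^ 2 + 1 / 8 * ((2 * β + 3) / (β + 1)) * n * w
      = ((n ^ 2 / 16 + 3 / 8 * n * w) + β * (n ^ 2 / 8 + n * w / 4)) / (β + 1) by
      field_simp; ring, le_div_iff₀ (by linarith)]
  nlinarith

/-- Buzano's inequality. -/
theorem norm_inner_mul_inner_le {𝕜 E : Type*} [RCLike 𝕜] [NormedAddCommGroup E]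
    [InnerProductSpace 𝕜 E] {x : E} (hx : ‖x‖ = 1) (a b : E) :
    ‖⟪a, x⟫_𝕜 * ⟪x, b⟫_𝕜‖ ≤ (‖a‖ * ‖b‖ + ‖⟪a, b⟫_𝕜‖) / 2 := by
  have hb' : ⟪a, (𝕜 ∙ x).reflection b⟫_𝕜 = 2 * (⟪a, x⟫_𝕜 * ⟪x, b⟫_𝕜) - ⟪a, b⟫_𝕜 := by
    rw [Submodule.reflection_apply, Submodule.starProjection_unit_singleton 𝕜 hx,
      inner_sub_right, two_smul, inner_add_right, inner_smul_right]
    ring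
  have := norm_inner_le_norm (𝕜 := 𝕜) a ((𝕜 ∙ x).reflection b)
  rw [LinearIsometryEquiv.norm_map, hb'] at this
  have := norm_sub_norm_le (2 * (⟪a, x⟫_𝕜 * ⟪x, b⟫_𝕜)) ⟪a, b⟫_𝕜
  rw [norm_mul, RCLike.norm_two] at this
  linarith

section NumericalRadius

variable {H : Type*} [NormedAddCommGroup H] [InnerProductSpace ℂ H]

theorem numRad_nonneg (A : H →L[ℂ] H) : 0 ≤ numRad A :=
  Real.sSup_nonneg fun _ ⟨_, _, ht⟩ => ht ▸ norm_nonneg _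

theorem norm_inner_le_numRad (A : H →L[ℂ] H) {x : H} (hx : ‖x‖ = 1) :
    ‖⟪A x, x⟫_ℂ‖ ≤ numRad A := by
  refine le_csSup ⟨‖A‖, ?_⟩ ⟨x, hx, rfl⟩
  rintro _ ⟨y, hy, rfl⟩
  simpa [hy] using (norm_inner_le_norm (A y) y).trans
    (mul_le_mul_of_nonneg_right (A.le_opNorm y) (norm_nonneg y))

theorem numRad_rpow_le (A : H →L[ℂ] H) {p c : ℝ} (hp : 0 < p) (hc : 0 ≤ c)
    (h : ∀ x : H, ‖x‖ = 1 → ‖⟪A x, x⟫_ℂ‖ ^ p ≤ c) : numRad A ^ p ≤ c := by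
  rw [← Real.le_rpow_inv_iff_of_pos (numRad_nonneg A) hc hp]
  exact Real.sSup_le (fun _ ⟨x, hx, ht⟩ =>
    ht ▸ (Real.le_rpow_inv_iff_of_pos (norm_nonneg _) hc hp).2 (h x hx)) (by positivity)

end NumericalRadius

section Operator

variable {H : Type*} [NormedAddCommGroup H] [InnerProductSpace ℂ H] [CompleteSpace H]

/-- McCarthy's inequality. -/
theorem rpow_re_inner_le_re_inner_cfc_rpow {T : H →L[ℂ] H} (hT : 0 ≤ T) {r : ℝ} (hr : 1 ≤ r)
    {x : H} (hx : ‖x‖ = 1) :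
    re ⟪T x, x⟫_ℂ ^ r ≤ re ⟪cfc (fun t : ℝ => t ^ r) T x, x⟫_ℂ := by
  have hT' : IsSelfAdjoint T := .of_nonneg hT
  set s := re ⟪T x, x⟫_ℂ
  have hs : 0 ≤ s := ((nonneg_iff_isPositive T).mp hT).re_inner_nonneg_left x
  set c := r * s ^ (r - 1)
  -- the tangent line of `t ↦ t ^ r` at `s` lies below it on the spectrum
  have tangent_cfc : cfc (fun t : ℝ => c * t + (s ^ r - c * s)) T ≤ cfc (fun t : ℝ => t ^ r) T :=
    cfc_mono (fun t ht => by linarith [Real.tangent_le_rpow hr hs (spectrum_nonneg_of_nonneg hT ht)])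
      (by fun_prop)
      (fun t _ => (Real.continuousAt_rpow_const t r (Or.inr (by linarith))).continuousWithinAt)
  rw [cfc_add T (fun t => c * t) (fun _ => s ^ r - c * s), cfc_const_mul_id c T,
    cfc_const (s ^ r - c * s) T, Algebra.algebraMap_eq_smul_one, le_def] at tangent_cfc
  have := tangent_cfc.re_inner_nonneg_left x
  have affine_form : re ⟪(c • T + (s ^ r - c * s) • (1 : H →L[ℂ] H)) x, x⟫_ℂ = s ^ r := by
    simp only [add_apply, smul_apply, one_apply_eq_self, inner_add_left, map_add,
      RCLike.real_smul_eq_coe_smul (K := ℂ), inner_smul_left, conj_ofReal, re_ofReal_mul,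
      inner_self_eq_norm_sq_to_K, hx, ofReal_one, one_pow, one_re]
    ring
  rw [sub_apply, inner_sub_left, map_sub, affine_form] at this
  linarith

section AbsoluteValue

variable {E F : Type*} [NormedAddCommGroup E] [InnerProductSpace ℂ E] [CompleteSpace E]
  [NormedAddCommGroup F] [InnerProductSpace ℂ F] [CompleteSpace F]

theorem cfc_rpow_two_mul_absOp (A : E →L[ℂ] F) {r : ℝ} (hr : 0 < r) :
    cfc (fun t : ℝ => t ^ (2 * r)) (absOp A) = cfc (fun t : ℝ => t ^ r) (adjoint A ∘L A) := by
  have hA : 0 ≤ adjoint A ∘L A := (nonneg_iff_isPositive _).mpr (isPositive_adjoint_comp_self A)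
  rw [absOp, ← cfc_comp' (fun t : ℝ => t ^ (2 * r)) Real.sqrt (adjoint A ∘L A)
    (fun t _ => (Real.continuousAt_rpow_const t _ (Or.inr (by linarith))).continuousWithinAt)]
  refine cfc_congr fun t ht => ?_
  rw [Real.sqrt_eq_rpow, ← Real.rpow_mul (spectrum_nonneg_of_nonneg hA ht)]
  ring_nf

theorem rpow_two_mul_norm_apply_le (A : E →L[ℂ] F) {r : ℝ} (hr : 1 ≤ r) {x : E}
    (hx : ‖x‖ = 1) :
    ‖A x‖ ^ (2 * r) ≤ re ⟪cfc (fun t : ℝ => t ^ (2 * r)) (absOp A) x, x⟫_ℂ := by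
  have hA : 0 ≤ adjoint A ∘L A := (nonneg_iff_isPositive _).mpr (isPositive_adjoint_comp_self A)
  have : re ⟪(adjoint A ∘L A) x, x⟫_ℂ = ‖A x‖ ^ 2 := by
    rw [comp_apply, adjoint_inner_left, inner_self_eq_norm_sq]
  rw [cfc_rpow_two_mul_absOp A (by linarith), Real.rpow_mul (norm_nonneg _), Real.rpow_two,
    ← this]
  exact rpow_re_inner_le_re_inner_cfc_rpow hA hr hx

end AbsoluteValue

theorem inner_sq_apply_self (M : H →L[ℂ] H) (x : H) :
    ⟪(M ^ 2) x, x⟫_ℂ = ⟪M x, adjoint M x⟫_ℂ := by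
  rw [pow_two, mul_apply_eq_comp, adjoint_inner_right]

theorem norm_inner_sq_apply_self_le (M : H →L[ℂ] H) (x : H) :
    ‖⟪(M ^ 2) x, x⟫_ℂ‖ ≤ ‖M x‖ * ‖adjoint M x‖ :=
  inner_sq_apply_self M x ▸ norm_inner_le_norm _ _

theorem norm_inner_apply_self_sq_le (M : H →L[ℂ] H) {x : H} (hx : ‖x‖ = 1) :
    ‖⟪M x, x⟫_ℂ‖ ^ 2 ≤ (‖M x‖ * ‖adjoint M x‖ + ‖⟪(M ^ 2) x, x⟫_ℂ‖) / 2 := by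
  have := norm_inner_mul_inner_le (𝕜 := ℂ) hx (M x) (adjoint M x)
  rwa [adjoint_inner_right M x x, ← inner_sq_apply_self, norm_mul, ← sq] at this

theorem rpow_norm_apply_mul_norm_adjoint_apply_le (M : H →L[ℂ] H) {r : ℝ} (hr : 1 ≤ r)
    {x : H} (hx : ‖x‖ = 1) :
    (‖M x‖ * ‖adjoint M x‖) ^ r ≤
      ‖cfc (fun t : ℝ => t ^ (2 * r)) (absOp M)
        + cfc (fun t : ℝ => t ^ (2 * r)) (absOp (adjoint M))‖ / 2 := by
  have hP := rpow_two_mul_norm_apply_le M hr hx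
  have hQ := rpow_two_mul_norm_apply_le (adjoint M) hr hx
  set P := cfc (fun t : ℝ => t ^ (2 * r)) (absOp M)
  set Q := cfc (fun t : ℝ => t ^ (2 * r)) (absOp (adjoint M))
  have hP₀ : 0 ≤ re ⟪P x, x⟫_ℂ := (Real.rpow_nonneg (norm_nonneg _) _).trans hP
  have hQ₀ : 0 ≤ re ⟪Q x, x⟫_ℂ := (Real.rpow_nonneg (norm_nonneg _) _).trans hQ
  have hPQ : re ⟪P x, x⟫_ℂ + re ⟪Q x, x⟫_ℂ ≤ ‖P + Q‖ := by
    rw [← map_add, ← inner_add_left, ← add_apply]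
    simpa [hx] using (re_inner_le_norm (𝕜 := ℂ) _ _).trans
      (mul_le_mul_of_nonneg_right ((P + Q).le_opNorm x) (norm_nonneg x))
  rw [← pow_le_pow_iff_left₀ (by positivity) (by linarith) two_ne_zero]
  calc ((‖M x‖ * ‖adjoint M x‖) ^ r) ^ 2 = ‖M x‖ ^ (2 * r) * ‖adjoint M x‖ ^ (2 * r) := by
        rw [← Real.rpow_natCast, ← Real.rpow_mul (by positivity),
          Real.mul_rpow (by positivity) (by positivity)]
        ring_nf
    _ ≤ re ⟪P x, x⟫_ℂ * re ⟪Q x, x⟫_ℂ := mul_le_mul hP hQ (by positivity) hP₀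
    _ ≤ ((re ⟪P x, x⟫_ℂ + re ⟪Q x, x⟫_ℂ) / 2) ^ 2 := by
        nlinarith [sq_nonneg (re ⟪P x, x⟫_ℂ - re ⟪Q x, x⟫_ℂ)]
    _ ≤ (‖P + Q‖ / 2) ^ 2 := by gcongr

end Operator

/-- `4r`-th power numerical radius bound for a single operator with parameter `β ≥ 0`. -/
theorem numRad_pow_four_r_bound {H : Type*}
    [NormedAddCommGroup H] [InnerProductSpace ℂ H] [CompleteSpace H]
    (M : H →L[ℂ] H) (β : ℝ) (hβ : 0 ≤ β) (r : ℝ) (hr : 1 ≤ r) :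
    numRad M ^ (4 * r) ≤
      1 / 16 * ((2 * β + 1) / (β + 1))
          * ‖cfc (fun t : ℝ => t ^ (2 * r)) (absOp M)
              + cfc (fun t : ℝ => t ^ (2 * r)) (absOp (adjoint M))‖ ^ 2
        + 1 / 8 * ((2 * β + 3) / (β + 1))
          * ‖cfc (fun t : ℝ => t ^ (2 * r)) (absOp M)
              + cfc (fun t : ℝ => t ^ (2 * r)) (absOp (adjoint M))‖
          * numRad (M ^ 2) ^ r := by
  set n := ‖cfc (fun t : ℝ => t ^ (2 * r)) (absOp M)
    + cfc (fun t : ℝ => t ^ (2 * r)) (absOp (adjoint M))‖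
  have hr₀ : 0 < r := by linarith
  have hu := fun x (hx : ‖x‖ = 1) => rpow_norm_apply_mul_norm_adjoint_apply_le M hr hx
  have hv := fun x (hx : ‖x‖ = 1) => Real.rpow_le_rpow (norm_nonneg _)
    (norm_inner_le_numRad (M ^ 2) hx) hr₀.le
  have hW : numRad (M ^ 2) ^ r ≤ n / 2 := numRad_rpow_le _ hr₀ (by positivity) fun x hx =>
    (Real.rpow_le_rpow (norm_nonneg _) (norm_inner_sq_apply_self_le M x) hr₀.le).trans (hu x hx)
  have hbound_nonneg := add_div_two_sq_le (p := 0) (q := 0) hβ le_rfl le_rfl (by positivity)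
    (Real.rpow_nonneg (numRad_nonneg _) r) hW
  refine numRad_rpow_le M (by positivity) (by simpa using hbound_nonneg) fun x hx => ?_
  have hs := Real.rpow_two_mul_le_of_sq_le hr (norm_nonneg _) (by positivity) (norm_nonneg _)
    (norm_inner_apply_self_sq_le M hx)
  calc ‖⟪M x, x⟫_ℂ‖ ^ (4 * r) = (‖⟪M x, x⟫_ℂ‖ ^ (2 * r)) ^ 2 := by
        rw [← Real.rpow_natCast, ← Real.rpow_mul (norm_nonneg _)]
        ring_nf
    _ ≤ (((‖M x‖ * ‖adjoint M x‖) ^ r + ‖⟪(M ^ 2) x, x⟫_ℂ‖ ^ r) / 2) ^ 2 := by gcongr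
    _ ≤ _ := add_div_two_sq_le hβ (by positivity) (by positivity) (hu x hx) (hv x hx) hW
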